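/- arXiv:cs/0604097 — 2 statements merged into one kernel-verified Lean document; each statement's English description precedes it below -/
import Mathlib

section
/- Let {ψ_i}_{i=1}^n be an orthonormal basis of ℝ^n with overlap at most K, and suppose ‖ψ_i‖₁ · ‖ψ_i‖_∞ ≤ M for every i. Let f ∈ ℝ^n, let B ≤ n, and let S ⊆ {1,…,n} with |S| = B consist of indices of the B largest values of |⟨f, ψ_i⟩| / ‖ψ_i‖₁ (i.e., |⟨f, ψ_i⟩|/‖ψ_i‖₁ ≥ |⟨f, ψ_k⟩|/‖ψ_k‖₁ whenever i ∈ S and k ∉ S). Then ‖f − Σ_{i∈S} ⟨f, ψ_i⟩ ψ_i‖_∞ ≤ K · M · E, where E = min over B-sparse z of ‖f − Σ_i z_i ψ_i‖_∞. -/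
/-- Standard inner product on `ℝ^n`. -/
noncomputable def dotp {n : ℕ} (x y : Fin n → ℝ) : ℝ := ∑ j, x j * y j

/-- The `ℓ₁` norm on `ℝ^n`. -/
noncomputable def l1Norm {n : ℕ} (x : Fin n → ℝ) : ℝ := ∑ j, |x j|

/-- The `ℓ∞` norm on `ℝ^n`. -/
noncomputable def linfNorm {n : ℕ} (x : Fin n → ℝ) : ℝ := ⨆ j, |x j|

/-- A vector is `B`-sparse if it has at most `B` nonzero components. -/
def Sparse {n : ℕ} (B : ℕ) (z : Fin n → ℝ) : Prop :=
  ({i | z i ≠ 0} : Set (Fin n)).ncard ≤ B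

lemma le_linf {n : ℕ} (x : Fin n → ℝ) (j : Fin n) : |x j| ≤ linfNorm x :=
  le_ciSup (f := fun j => |x j|) (Set.Finite.bddAbove (Set.finite_range _)) j
lemma linf_nonneg {n : ℕ} (x : Fin n → ℝ) : 0 ≤ linfNorm x := by
  cases isEmpty_or_nonempty (Fin n)
  · simp [linfNorm, Real.iSup_of_isEmpty]
  · exact le_trans (abs_nonneg _) (le_linf x (Classical.arbitrary _))
lemma dot_le {n : ℕ} (x : Fin n → ℝ) (y : Fin n → ℝ) :
    |dotp x y| ≤ linfNorm x * l1Norm y := by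
  calc |dotp x y| ≤ ∑ j, |x j * y j| := Finset.abs_sum_le_sum_abs _ _
    _ ≤ ∑ j, linfNorm x * |y j| := by
        refine Finset.sum_le_sum fun j _ => ?_
        rw [abs_mul]
        exact mul_le_mul_of_nonneg_right (le_linf x j) (abs_nonneg _)
    _ = linfNorm x * l1Norm y := by rw [l1Norm, Finset.mul_sum]
lemma l1_pos {n : ℕ} (ψ : Fin n → Fin n → ℝ)
    (horth : ∀ i k, dotp (ψ i) (ψ k) = if i = k then (1:ℝ) else 0) (i : Fin n) :
    0 < l1Norm (ψ i) := by
  rcases eq_or_lt_of_le (Finset.sum_nonneg (fun j _ => abs_nonneg (ψ i j)) :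
      (0:ℝ) ≤ l1Norm (ψ i)) with h | h
  · exfalso
    have hz : ∀ j, ψ i j = 0 := by
      intro j
      have := (Finset.sum_eq_zero_iff_of_nonneg (fun j _ => abs_nonneg (ψ i j))).mp h.symm j
        (Finset.mem_univ j)
      simpa using this
    have := horth i i
    simp [dotp, hz] at this
  · exact h

lemma recon {n : ℕ} (ψ : Fin n → Fin n → ℝ)
    (horth : ∀ i k, dotp (ψ i) (ψ k) = if i = k then (1:ℝ) else 0)
    (x : Fin n → ℝ) (j : Fin n) :
    ∑ i, dotp x (ψ i) * ψ i j = x j := by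
  have hA : (Matrix.of ψ) * (Matrix.of ψ).transpose = 1 := by
    ext i k
    simpa [Matrix.mul_apply, Matrix.one_apply, dotp] using horth i k
  have hB : (Matrix.of ψ).transpose * (Matrix.of ψ) = 1 := mul_eq_one_comm.mp hA
  have hcol : ∀ l, ∑ i, ψ i l * ψ i j = if l = j then (1:ℝ) else 0 := by
    intro l
    have := congrFun (congrFun hB l) j
    simpa [Matrix.mul_apply, Matrix.one_apply, Matrix.transpose_apply] using this
  calc ∑ i, dotp x (ψ i) * ψ i j = ∑ i, ∑ l, x l * ψ i l * ψ i j := by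
        simp [dotp, Finset.sum_mul]
    _ = ∑ l, x l * ∑ i, ψ i l * ψ i j := by
        rw [Finset.sum_comm]
        simp [Finset.mul_sum, mul_assoc]
    _ = x j := by simp [hcol]

-- residual inner product
lemma dot_resid {n : ℕ} (ψ : Fin n → Fin n → ℝ)
    (horth : ∀ i k, dotp (ψ i) (ψ k) = if i = k then (1:ℝ) else 0)
    (f z : Fin n → ℝ) (i : Fin n) :
    dotp (fun j => f j - ∑ k, z k * ψ k j) (ψ i) = dotp f (ψ i) - z i := by
  have : ∑ j, (∑ k, z k * ψ k j) * ψ i j = z i := by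
    calc ∑ j, (∑ k, z k * ψ k j) * ψ i j = ∑ k, z k * ∑ j, ψ k j * ψ i j := by
          simp only [Finset.sum_mul, Finset.mul_sum, mul_assoc]
          exact Finset.sum_comm
      _ = ∑ k, z k * (if k = i then (1:ℝ) else 0) := by
          refine Finset.sum_congr rfl fun k _ => ?_
          rw [← horth k i]; rfl
      _ = z i := by simp
  simp only [dotp, sub_mul, Finset.sum_sub_distrib, this]

-- key: coefficient bound for i ∉ S
lemma key {n B : ℕ} (ψ : Fin n → Fin n → ℝ)
    (horth : ∀ i k, dotp (ψ i) (ψ k) = if i = k then (1:ℝ) else 0)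
    (f : Fin n → ℝ) (S : Finset (Fin n)) (hcard : S.card = B)
    (hS : ∀ i ∈ S, ∀ k ∉ S,
      |dotp f (ψ k)| / l1Norm (ψ k) ≤ |dotp f (ψ i)| / l1Norm (ψ i))
    (z : Fin n → ℝ) (hz : Sparse B z) (i : Fin n) (hi : i ∉ S) :
    |dotp f (ψ i)| ≤ linfNorm (fun j => f j - ∑ k, z k * ψ k j) * l1Norm (ψ i) := by
  set e := linfNorm (fun j => f j - ∑ k, z k * ψ k j) with he
  have base : ∀ m : Fin n, z m = 0 → |dotp f (ψ m)| ≤ e * l1Norm (ψ m) := by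
    intro m hm
    have h1 := dot_le (fun j => f j - ∑ k, z k * ψ k j) (ψ m)
    rw [dot_resid ψ horth f z m, hm, sub_zero] at h1
    exact h1
  by_cases hzi : z i = 0
  · exact base i hzi
  · -- find k ∈ S with z k = 0
    have hk : ∃ k ∈ S, z k = 0 := by
      by_contra hc
      push_neg at hc
      have hsub : ((insert i S : Finset (Fin n)) : Set (Fin n)) ⊆ {m | z m ≠ 0} := by
        intro m hm
        simp only [Finset.coe_insert, Set.mem_insert_iff, Finset.mem_coe] at hm
        rcases hm with rfl | hm
        · exact hzi
        · exact hc m hm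
      have h1 : (insert i S).card ≤ B :=
        le_trans (le_of_eq (Set.ncard_coe_finset _).symm)
          (le_trans (Set.ncard_le_ncard hsub (Set.toFinite _)) hz)
      rw [Finset.card_insert_of_notMem hi, hcard] at h1
      omega
    obtain ⟨k, hkS, hzk⟩ := hk
    have hpi := l1_pos ψ horth i
    have hpk := l1_pos ψ horth k
    have h2 : |dotp f (ψ i)| / l1Norm (ψ i) ≤ |dotp f (ψ k)| / l1Norm (ψ k) :=
      hS k hkS i hi
    have h3 : |dotp f (ψ k)| / l1Norm (ψ k) ≤ e := by
      rw [div_le_iff₀ hpk]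
      exact base k hzk
    rw [← div_le_iff₀ hpi]
    exact le_trans h2 h3
/-- let `{ψ_i}` be an orthonormal basis of `ℝ^n` with overlap at most `K`
(every coordinate lies in the support of at most `K` of the `ψ_i`), with
`‖ψ_i‖₁ · ‖ψ_i‖_∞ ≤ M` for every `i`.  Let `f ∈ ℝ^n`, `B ≤ n`, and let `S` be a set of
`B` indices of the `B` largest values of `|⟨f, ψ_i⟩|/‖ψ_i‖₁`.  Then
`‖f − Σ_{i∈S} ⟨f, ψ_i⟩ ψ_i‖_∞ ≤ K · M · E`, where `E` is the minimum over `B`-sparse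
`z` of `‖f − Σ_i z_i ψ_i‖_∞`. -/
theorem stmt4 {n B K : ℕ} (ψ : Fin n → Fin n → ℝ)
    (horth : ∀ i k, dotp (ψ i) (ψ k) = if i = k then (1 : ℝ) else 0)
    (hK : ∀ j : Fin n, ({i | ψ i j ≠ 0} : Set (Fin n)).ncard ≤ K)
    (M : ℝ) (hM : ∀ i, l1Norm (ψ i) * linfNorm (ψ i) ≤ M)
    (f : Fin n → ℝ) (hB : B ≤ n)
    (S : Finset (Fin n)) (hcard : S.card = B)
    (hS : ∀ i ∈ S, ∀ k ∉ S,
      |dotp f (ψ k)| / l1Norm (ψ k) ≤ |dotp f (ψ i)| / l1Norm (ψ i)) :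
    linfNorm (fun j => f j - ∑ i ∈ S, dotp f (ψ i) * ψ i j) ≤
      (K : ℝ) * M *
        sInf {e : ℝ | ∃ z : Fin n → ℝ, Sparse B z ∧
          e = linfNorm (fun j => f j - ∑ i, z i * ψ i j)} := by
  set E := {e : ℝ | ∃ z : Fin n → ℝ, Sparse B z ∧
      e = linfNorm (fun j => f j - ∑ i, z i * ψ i j)} with hE
  have hne : E.Nonempty := by
    refine ⟨_, (0 : Fin n → ℝ), ?_, rfl⟩
    simp [Sparse]
  have hbdd : BddBelow E := by
    refine ⟨0, fun e he => ?_⟩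
    obtain ⟨z, _, rfl⟩ := he
    exact linf_nonneg _
  rcases Nat.eq_zero_or_pos n with hn | hn
  · -- n = 0 : everything is the empty sup = 0
    subst hn
    have h0 : ∀ x : Fin 0 → ℝ, linfNorm x = 0 := fun x => by
      simp [linfNorm, Real.iSup_of_isEmpty]
    have hEeq : E = {0} := by
      ext e
      constructor
      · rintro ⟨z, _, rfl⟩; simp [h0]
      · rintro rfl; exact ⟨0, by simp [Sparse], (h0 _).symm⟩
    rw [h0, hEeq]
    simp
  · haveI : Nonempty (Fin n) := ⟨⟨0, hn⟩⟩
    -- M ≥ 0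
    have hM0 : 0 ≤ M := le_trans (mul_nonneg
        (Finset.sum_nonneg fun j _ => abs_nonneg _) (linf_nonneg _))
      (hM (Classical.arbitrary _))
    have hKM0 : 0 ≤ (K : ℝ) * M := mul_nonneg (Nat.cast_nonneg K) hM0
    -- main pointwise bound
    have hmain : ∀ e ∈ E, ∀ j : Fin n,
        |f j - ∑ i ∈ S, dotp f (ψ i) * ψ i j| ≤ (K : ℝ) * M * e := by
      rintro e ⟨z, hz, rfl⟩ j
      set e := linfNorm (fun j => f j - ∑ i, z i * ψ i j) with hedef
      have he0 : 0 ≤ e := linf_nonneg _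
      have hrj : f j - ∑ i ∈ S, dotp f (ψ i) * ψ i j
          = ∑ i ∈ Finset.univ \ S, dotp f (ψ i) * ψ i j := by
        rw [Finset.sum_sdiff_eq_sub (Finset.subset_univ S),
          recon ψ horth f j]
      set F := (Finset.univ \ S).filter (fun i => ψ i j ≠ 0) with hF
      have hFcard : (F.card : ℝ) ≤ (K : ℝ) := by
        have hsub : (F : Set (Fin n)) ⊆ {i | ψ i j ≠ 0} := by
          intro i hi
          simp only [hF, Finset.coe_filter, Set.mem_setOf_eq] at hi
          exact hi.2
        have := le_trans (Set.ncard_le_ncard hsub (Set.toFinite _)) (hK j)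
        rw [Set.ncard_coe_finset] at this
        exact_mod_cast this
      calc |f j - ∑ i ∈ S, dotp f (ψ i) * ψ i j|
          = |∑ i ∈ F, dotp f (ψ i) * ψ i j| := by
            rw [hrj]
            congr 1
            refine (Finset.sum_filter_of_ne ?_).symm
            intro i _ hne0 hpsi
            exact hne0 (by rw [hpsi, mul_zero])
        _ ≤ ∑ i ∈ F, |dotp f (ψ i) * ψ i j| := Finset.abs_sum_le_sum_abs _ _
        _ ≤ ∑ i ∈ F, e * M := by
            refine Finset.sum_le_sum fun i hi => ?_
            have hiS : i ∉ S := by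
              simp only [hF, Finset.mem_filter, Finset.mem_sdiff] at hi
              exact hi.1.2
            have h1 : |dotp f (ψ i)| ≤ e * l1Norm (ψ i) :=
              key ψ horth f S hcard hS z hz i hiS
            have h2 : |ψ i j| ≤ linfNorm (ψ i) := le_linf _ j
            calc |dotp f (ψ i) * ψ i j| = |dotp f (ψ i)| * |ψ i j| := abs_mul _ _
              _ ≤ (e * l1Norm (ψ i)) * linfNorm (ψ i) :=
                  mul_le_mul h1 h2 (abs_nonneg _)
                    (mul_nonneg he0 (le_of_lt (l1_pos ψ horth i)))
              _ = e * (l1Norm (ψ i) * linfNorm (ψ i)) := by ring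
              _ ≤ e * M := mul_le_mul_of_nonneg_left (hM i) he0
        _ = (F.card : ℝ) * (e * M) := by rw [Finset.sum_const, nsmul_eq_mul]
        _ ≤ (K : ℝ) * (e * M) :=
            mul_le_mul_of_nonneg_right hFcard (mul_nonneg he0 hM0)
        _ = (K : ℝ) * M * e := by ring
    -- conclude
    refine ciSup_le fun j => ?_
    rcases eq_or_lt_of_le hKM0 with h0 | h0
    · obtain ⟨e0, he0⟩ := hne
      have := hmain e0 he0 j
      rw [← h0, zero_mul] at this
      rw [← h0, zero_mul]
      exact this
    · rw [← div_le_iff₀' h0]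
      refine le_csInf hne fun e he => ?_
      rw [div_le_iff₀' h0]
      exact hmain e he j
end

section
/- Let {ψ_i}_{i=1}^n be an orthonormal basis of ℝ^n with overlap at most K, let 1 ≤ p < ∞ with Hölder conjugate p', let f, z ∈ ℝ^n, and suppose ‖f − Σ_i z_i ψ_i‖_p ≤ E. Then Σ_{k=1}^n |⟨f, ψ_k⟩ − z_k|^p / ‖ψ_k‖_{p'}^p ≤ K · E^p. -/
/-!
Write `r = f - Σ_i z_i ψ_i`. Orthonormality turns `⟨f, ψ_k⟩ - z_k` into `⟨r, ψ_k⟩`, and Hölder's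
inequality applied to `r` restricted to the support of `ψ_k` bounds
`|⟨r, ψ_k⟩|^p / ‖ψ_k‖_{p'}^p` by `Σ_{j ∈ supp ψ_k} |r_j|^p`. Summing over `k`, each `|r_j|^p` is
counted at most `K` times, so the total is at most `K ‖r‖_p^p ≤ K E^p`.
-/

open scoped ENNReal

noncomputable def lpNorm {n : ℕ} (p : ℝ≥0∞) (x : Fin n → ℝ) : ℝ :=
  if p = ∞ then ⨆ j, |x j| else (∑ j, |x j| ^ p.toReal) ^ (1 / p.toReal)

section

variable {n : ℕ}

lemma dotp_comm (x y : Fin n → ℝ) : dotp x y = dotp y x := by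
  simp only [dotp, mul_comm]

lemma lpNorm_top (x : Fin n → ℝ) : lpNorm ∞ x = ⨆ j, |x j| := if_pos rfl

lemma lpNorm_one (x : Fin n → ℝ) : lpNorm 1 x = ∑ j, |x j| := by
  simp [lpNorm]

lemma lpNorm_of_ne_top {p : ℝ≥0∞} (hp : p ≠ ∞) (x : Fin n → ℝ) :
    lpNorm p x = (∑ j, |x j| ^ p.toReal) ^ (1 / p.toReal) := if_neg hp

lemma lpNorm_nonneg (p : ℝ≥0∞) (x : Fin n → ℝ) : 0 ≤ lpNorm p x := by
  unfold lpNorm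
  split_ifs
  · exact Real.iSup_nonneg fun j => abs_nonneg (x j)
  · positivity

lemma abs_le_lpNorm_top (x : Fin n → ℝ) (j : Fin n) : |x j| ≤ lpNorm ∞ x :=
  lpNorm_top x ▸ le_ciSup (f := fun j => |x j|) (Set.finite_range _).bddAbove j

lemma lpNorm_rpow_toReal {p : ℝ≥0∞} (hp0 : p ≠ 0) (hp : p ≠ ∞) (x : Fin n → ℝ) :
    lpNorm p x ^ p.toReal = ∑ j, |x j| ^ p.toReal := by
  rw [lpNorm_of_ne_top hp, one_div,
    Real.rpow_inv_rpow (by positivity) (ENNReal.toReal_ne_zero.2 ⟨hp0, hp⟩)]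

lemma abs_dotp_le_lpNorm_one_mul_lpNorm_top (x y : Fin n → ℝ) :
    |dotp x y| ≤ lpNorm 1 x * lpNorm ∞ y := by
  rw [lpNorm_one, Finset.sum_mul]
  refine (Finset.abs_sum_le_sum_abs _ _).trans (Finset.sum_le_sum fun j _ => ?_)
  rw [abs_mul]
  exact mul_le_mul_of_nonneg_left (abs_le_lpNorm_top y j) (abs_nonneg _)

theorem abs_dotp_le_lpNorm_mul_lpNorm (p q : ℝ≥0∞) [p.HolderConjugate q] (x y : Fin n → ℝ) :
    |dotp x y| ≤ lpNorm p x * lpNorm q y := by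
  rcases eq_or_ne p ∞ with rfl | hp
  · obtain rfl : q = 1 := (ENNReal.HolderConjugate.eq_top_iff_eq_one ∞ q).1 rfl
    rw [dotp_comm, mul_comm]
    exact abs_dotp_le_lpNorm_one_mul_lpNorm_top y x
  rcases eq_or_ne q ∞ with rfl | hq
  · obtain rfl : p = 1 := (ENNReal.HolderConjugate.eq_top_iff_eq_one ∞ p).1 rfl
    exact abs_dotp_le_lpNorm_one_mul_lpNorm_top x y
  have hpq := ENNReal.HolderConjugate.toReal_of_ne_top hp hq
  rw [lpNorm_of_ne_top hp, lpNorm_of_ne_top hq]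
  refine (Finset.abs_sum_le_sum_abs _ _).trans ?_
  simp only [abs_mul]
  exact Real.inner_le_Lp_mul_Lq_of_nonneg _ hpq (fun j _ => abs_nonneg _) fun j _ => abs_nonneg _

lemma dotp_eq_dotp_restrict_support (x y : Fin n → ℝ) :
    dotp x y = dotp (fun j => if y j = 0 then 0 else x j) y := by
  refine Finset.sum_congr rfl fun j _ => ?_
  by_cases hj : y j = 0 <;> simp [hj]

theorem abs_dotp_rpow_div_lpNorm_rpow_le (p q : ℝ≥0∞) [p.HolderConjugate q] (hp : p ≠ ∞)
    (x y : Fin n → ℝ) :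
    |dotp x y| ^ p.toReal / lpNorm q y ^ p.toReal ≤
      ∑ j, if y j = 0 then 0 else |x j| ^ p.toReal := by
  have hp0 : 0 < p.toReal := ENNReal.toReal_pos (ENNReal.HolderConjugate.ne_zero p q) hp
  set x' := fun j => if y j = 0 then 0 else x j
  have hx' : lpNorm p x' ^ p.toReal = ∑ j, if y j = 0 then 0 else |x j| ^ p.toReal := by
    rw [lpNorm_rpow_toReal (ENNReal.HolderConjugate.ne_zero p q) hp]
    refine Finset.sum_congr rfl fun j _ => ?_
    split_ifs with hj <;> simp [x', hj, hp0.ne']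
  refine div_le_of_le_mul₀ (Real.rpow_nonneg (lpNorm_nonneg q y) _)
    (hx' ▸ Real.rpow_nonneg (lpNorm_nonneg p x') _) ?_
  calc |dotp x y| ^ p.toReal
      ≤ (lpNorm p x' * lpNorm q y) ^ p.toReal := by
        rw [dotp_eq_dotp_restrict_support]
        exact Real.rpow_le_rpow (abs_nonneg _) (abs_dotp_le_lpNorm_mul_lpNorm p q x' y) hp0.le
    _ = _ := by rw [Real.mul_rpow (lpNorm_nonneg p x') (lpNorm_nonneg q y), hx']

lemma dotp_sub_sum_mul_of_orthonormal {ι : Type*} [Fintype ι] [DecidableEq ι]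
    (ψ : ι → Fin n → ℝ) (horth : ∀ i k, dotp (ψ i) (ψ k) = if i = k then (1 : ℝ) else 0)
    (f : Fin n → ℝ) (z : ι → ℝ) (k : ι) :
    dotp (fun j => f j - ∑ i, z i * ψ i j) (ψ k) = dotp f (ψ k) - z k := by
  calc dotp (fun j => f j - ∑ i, z i * ψ i j) (ψ k)
      = dotp f (ψ k) - ∑ j, (∑ i, z i * ψ i j) * ψ k j := by
        simp only [dotp, sub_mul, Finset.sum_sub_distrib]
    _ = dotp f (ψ k) - ∑ i, z i * dotp (ψ i) (ψ k) := by
        simp only [dotp, Finset.sum_mul, Finset.mul_sum, mul_assoc]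
        rw [Finset.sum_comm]
    _ = dotp f (ψ k) - z k := by simp [horth]

lemma sum_rpow_le_rpow_of_lpNorm_le {p : ℝ≥0∞} (hp0 : p ≠ 0) (hp : p ≠ ∞)
    {x : Fin n → ℝ} {E : ℝ} (hE : lpNorm p x ≤ E) :
    ∑ j, |x j| ^ p.toReal ≤ E ^ p.toReal := by
  rw [← lpNorm_rpow_toReal hp0 hp]
  exact Real.rpow_le_rpow (lpNorm_nonneg p x) hE ENNReal.toReal_nonneg

end

lemma sum_sum_ite_le_mul_sum {ι κ : Type*} [Fintype ι] [Fintype κ] {K : ℕ} (ψ : ι → κ → ℝ)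
    (hK : ∀ j, ({i | ψ i j ≠ 0} : Set ι).ncard ≤ K) (a : κ → ℝ) (ha : ∀ j, 0 ≤ a j) :
    ∑ i, ∑ j, (if ψ i j = 0 then 0 else a j) ≤ K * ∑ j, a j := by
  classical
  rw [Finset.sum_comm, Finset.mul_sum]
  refine Finset.sum_le_sum fun j _ => ?_
  rw [Finset.sum_ite, Finset.sum_const_zero, zero_add, Finset.sum_const, nsmul_eq_mul]
  refine mul_le_mul_of_nonneg_right ?_ (ha j)
  have := hK j
  rw [Set.ncard_eq_toFinset_card', Set.toFinset_ofPred] at this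
  exact_mod_cast this

theorem stmt5_general {n K : ℕ} (ψ : Fin n → Fin n → ℝ)
    (horth : ∀ i k, dotp (ψ i) (ψ k) = if i = k then (1 : ℝ) else 0)
    (hK : ∀ j : Fin n, ({i | ψ i j ≠ 0} : Set (Fin n)).ncard ≤ K)
    (p q : ℝ≥0∞) (hptop : p ≠ ∞) (hpq : 1 / p + 1 / q = 1)
    (f z : Fin n → ℝ) (E : ℝ)
    (hE : lpNorm p (fun j => f j - ∑ i, z i * ψ i j) ≤ E) :
    ∑ k, |dotp f (ψ k) - z k| ^ p.toReal / lpNorm q (ψ k) ^ p.toReal ≤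
      (K : ℝ) * E ^ p.toReal := by
  have : p.HolderConjugate q := ENNReal.holderConjugate_iff.2 (by simpa only [one_div] using hpq)
  set r := fun j => f j - ∑ i, z i * ψ i j
  calc ∑ k, |dotp f (ψ k) - z k| ^ p.toReal / lpNorm q (ψ k) ^ p.toReal
      = ∑ k, |dotp r (ψ k)| ^ p.toReal / lpNorm q (ψ k) ^ p.toReal := by
        simp only [r, dotp_sub_sum_mul_of_orthonormal ψ horth]
    _ ≤ ∑ k, ∑ j, if ψ k j = 0 then 0 else |r j| ^ p.toReal :=
        Finset.sum_le_sum fun k _ => abs_dotp_rpow_div_lpNorm_rpow_le p q hptop r (ψ k)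
    _ ≤ K * ∑ j, |r j| ^ p.toReal :=
        sum_sum_ite_le_mul_sum ψ hK _ fun j => by positivity
    _ ≤ K * E ^ p.toReal := by
        gcongr
        exact sum_rpow_le_rpow_of_lpNorm_le (ENNReal.HolderConjugate.ne_zero p q) hptop hE

/-- let `{ψ_i}` be an orthonormal basis of `ℝ^n` with overlap at most `K`
(every coordinate lies in the support of at most `K` of the `ψ_i`), let `1 ≤ p < ∞`
with Hölder conjugate `q` (`1/p + 1/q = 1`, `q = ∞` when `p = 1`), let `f, z ∈ ℝ^n`,
and suppose `‖f − Σ_i z_i ψ_i‖_p ≤ E`.  Then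
`Σ_k |⟨f, ψ_k⟩ − z_k|^p / ‖ψ_k‖_q^p ≤ K · E^p`. -/
theorem stmt5 {n K : ℕ} (ψ : Fin n → Fin n → ℝ)
    (horth : ∀ i k, dotp (ψ i) (ψ k) = if i = k then (1 : ℝ) else 0)
    (hK : ∀ j : Fin n, ({i | ψ i j ≠ 0} : Set (Fin n)).ncard ≤ K)
    (p q : ℝ≥0∞) (hp1 : 1 ≤ p) (hptop : p ≠ ∞) (hpq : 1 / p + 1 / q = 1)
    (f z : Fin n → ℝ) (E : ℝ)
    (hE : lpNorm p (fun j => f j - ∑ i, z i * ψ i j) ≤ E) :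
    ∑ k, |dotp f (ψ k) - z k| ^ p.toReal / lpNorm q (ψ k) ^ p.toReal ≤
      (K : ℝ) * E ^ p.toReal :=
  stmt5_general ψ horth hK p q hptop hpq f z E hE
end
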